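/- arXiv:2402.08545 — 6 statements merged into one kernel-verified Lean document; each statement's English description precedes it below -/
import Mathlib

section
/- For any Hermitian positive definite matrix A ∈ C^{d×d}, the condition number κ(A) = λ_max(A)/λ_min(A) satisfies κ(A) ≤ (1+x)/(1−x), where x = sqrt(1 − (d/tr(A))^d · det(A)). -/
open Matrix
open scoped ComplexOrder

/-!
The eigenvalues of `A` are positive, with sum `tr A` and product `det A`. Replacing the smallest
one `a` and the largest one `b` by their mean keeps the sum, so AM-GM applied to the new tuple gives
`det A · ((a + b) / 2)² ≤ a b (tr A / d)^d`, i.e. `y := (d / tr A)^d det A ≤ 4ab / (a + b)²`.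
Hence `x² = 1 - y ≥ ((b - a) / (a + b))²`, which rearranges to `b / a ≤ (1 + x) / (1 - x)`.
-/

lemma Real.prod_le_arith_mean_pow {ι : Type*} {s : Finset ι} (hs : s.Nonempty) {z : ι → ℝ}
    (hz : ∀ i ∈ s, 0 ≤ z i) : ∏ i ∈ s, z i ≤ ((∑ i ∈ s, z i) / s.card) ^ s.card := by
  have h := Real.geom_mean_le_arith_mean s 1 z (fun _ _ ↦ zero_le_one) (by simpa using hs) hz
  simp only [Pi.one_apply, Real.rpow_one, Finset.sum_const, nsmul_eq_mul, mul_one, one_mul] at h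
  calc ∏ i ∈ s, z i = ((∏ i ∈ s, z i) ^ ((s.card : ℝ)⁻¹)) ^ s.card :=
        (Real.rpow_inv_natCast_pow (Finset.prod_nonneg hz) hs.card_pos.ne').symm
    _ ≤ _ := by gcongr; exact Real.rpow_nonneg (Finset.prod_nonneg hz) _

lemma Real.prod_mul_sq_add_div_two_le {ι : Type*} [Fintype ι] [DecidableEq ι] {z : ι → ℝ}
    (hz : ∀ k, 0 ≤ z k) (i j : ι) :
    (∏ k, z k) * ((z i + z j) / 2) ^ 2 ≤
      z i * z j * ((∑ k, z k) / Fintype.card ι) ^ Fintype.card ι := by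
  have hne : (Finset.univ : Finset ι).Nonempty := ⟨i, Finset.mem_univ i⟩
  obtain rfl | hij := eq_or_ne i j
  · rw [add_self_div_two, ← sq, mul_comm]
    exact mul_le_mul_of_nonneg_left (prod_le_arith_mean_pow hne fun k _ ↦ hz k) (sq_nonneg _)
  set c := (z i + z j) / 2
  set g := ({i, j} : Finset ι).piecewise (fun _ ↦ c) z
  have hsum : ∑ k, g k = ∑ k, z k := by
    rw [Finset.sum_piecewise, Finset.univ_inter, ← Finset.compl_eq_univ_sdiff, Finset.sum_const,
      Finset.card_pair hij, ← Finset.sum_add_sum_compl {i, j} z, Finset.sum_pair hij]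
    simp only [c]
    ring
  have hprod : (∏ k, z k) * c ^ 2 = z i * z j * ∏ k, g k := by
    rw [Finset.prod_piecewise, Finset.univ_inter, ← Finset.compl_eq_univ_sdiff, Finset.prod_const,
      Finset.card_pair hij, ← Finset.prod_mul_prod_compl {i, j} z, Finset.prod_pair hij]
    ring
  have hg : ∀ k ∈ Finset.univ, 0 ≤ g k := by
    intro k _
    by_cases hk : k ∈ ({i, j} : Finset ι)
    · simp only [g, Finset.piecewise_eq_of_mem _ _ _ hk]; have := hz i; have := hz j; positivity
    · simp only [g, Finset.piecewise_eq_of_notMem _ _ _ hk, hz]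
  rw [hprod, ← hsum]
  gcongr
  · exact mul_nonneg (hz i) (hz j)
  · simpa using prod_le_arith_mean_pow hne hg

lemma div_le_one_add_sqrt_div_one_sub_sqrt {a b y : ℝ} (ha : 0 < a) (hb : 0 < b) (hy : 0 < y)
    (h : y * (a + b) ^ 2 ≤ 4 * a * b) :
    b / a ≤ (1 + √(1 - y)) / (1 - √(1 - y)) := by
  have hy1 : y ≤ 1 := by
    refine le_of_mul_le_mul_right (a := (a + b) ^ 2) ?_ (by positivity)
    nlinarith [sq_nonneg (a - b)]
  set x := √(1 - y)
  have hx0 : 0 ≤ x := Real.sqrt_nonneg _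
  have hxsq : x ^ 2 = 1 - y := Real.sq_sqrt (by linarith)
  have hx1 : x < 1 := by nlinarith
  have hgap : |b - a| ≤ x * (a + b) := by
    refine abs_le_of_sq_le_sq ?_ (by positivity)
    rw [mul_pow, hxsq]
    linarith
  rw [div_le_div_iff₀ ha (by linarith)]
  nlinarith [le_abs_self (b - a)]

/-- Condition number bound: for a Hermitian positive definite `A ∈ ℂ^{d×d}`,
`λ_max(A)/λ_min(A) ≤ (1+x)/(1−x)` where `x = sqrt(1 − (d/tr A)^d · det A)`. -/
theorem stmt2 {d : ℕ} (hd : 0 < d) (A : Matrix (Fin d) (Fin d) ℂ)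
    (hA : A.PosDef) :
    (⨆ i, hA.1.eigenvalues i) / (⨅ i, hA.1.eigenvalues i) ≤
      (1 + Real.sqrt (1 - ((d : ℝ) / A.trace.re) ^ d * A.det.re)) /
        (1 - Real.sqrt (1 - ((d : ℝ) / A.trace.re) ^ d * A.det.re)) := by
  have : Nonempty (Fin d) := ⟨⟨0, hd⟩⟩
  set μ := hA.1.eigenvalues
  have hμ : ∀ k, 0 < μ k := hA.eigenvalues_pos
  obtain ⟨i, hi⟩ := exists_eq_ciInf_of_finite (f := μ)
  obtain ⟨j, hj⟩ := exists_eq_ciSup_of_finite (f := μ)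
  have htr : A.trace.re = ∑ k, μ k := by simp [μ, hA.1.trace_eq_sum_eigenvalues]
  have hdet : A.det.re = ∏ k, μ k := by rw [hA.1.det_eq_prod_eigenvalues]; norm_cast
  have hS : 0 < ∑ k, μ k := Finset.sum_pos (fun k _ ↦ hμ k) Finset.univ_nonempty
  rw [← hi, ← hj, htr, hdet]
  refine div_le_one_add_sqrt_div_one_sub_sqrt (hμ i) (hμ j)
    (mul_pos (by positivity) (Finset.prod_pos fun k _ ↦ hμ k)) ?_
  have hmean := Real.prod_mul_sq_add_div_two_le (fun k ↦ (hμ k).le) i j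
  rw [Fintype.card_fin] at hmean
  rw [← inv_div, inv_pow, inv_mul_eq_div, div_mul_eq_mul_div, div_le_iff₀ (by positivity)]
  linarith
end

section
/- Let A ∈ C^{d×d} be Hermitian positive semidefinite with A ⪯ I, let û > λ_max(A), and let B be a finite set of vectors in C^d with ‖v‖² = α for all v ∈ B and ∑_{v∈B} vv* = I − A. Suppose α·λ_max((ûI−A)^{-1}) < 1. Then ∑_{v∈B} log(1 − v*(ûI−A)^{-1}v) ≥ (1/α)·tr[(I−A)·log(I − α(ûI−A)^{-1})]. -/
/-
Let `H = 1 - α (ûI - A)⁻¹ = ∑ⱼ μⱼ uⱼ uⱼ*`. An eigenvector `u` of `H` gives `y = (ûI - A)⁻¹ u`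
with `y* (ûI - A - α) y = μ · y* (ûI - A) y`, so `ûI - A > α` forces every `μⱼ > 0`.
For each `vᵢ` the weights `wᵢⱼ = |uⱼ* vᵢ|²` sum to `‖vᵢ‖² = α`, and
`1 - vᵢ* (ûI - A)⁻¹ vᵢ = α⁻¹ ∑ⱼ wᵢⱼ μⱼ`, while `vᵢ* (log H) vᵢ = ∑ⱼ wᵢⱼ log μⱼ`.
Jensen's inequality for the concave `log` compares the two, and summing over `i` with
`∑ᵢ vᵢ vᵢ* = I - A` turns the right-hand sides into `α⁻¹ tr[(I - A) log H]`.
-/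

open Matrix
open scoped ComplexOrder

/-- The matrix logarithm of a Hermitian matrix, defined via its spectral
decomposition: `log A = U · diag(log λ_i) · U*`. -/
noncomputable def matLog {d : ℕ} (A : Matrix (Fin d) (Fin d) ℂ)
    (hA : A.IsHermitian) : Matrix (Fin d) (Fin d) ℂ :=
  (hA.eigenvectorUnitary : Matrix (Fin d) (Fin d) ℂ) *
    Matrix.diagonal (fun i => (Real.log (hA.eigenvalues i) : ℂ)) *
      (star hA.eigenvectorUnitary : Matrix (Fin d) (Fin d) ℂ)

theorem Real.inv_mul_sum_mul_log_le_log_sum_mul_div {ι : Type*} (s : Finset ι) {w μ : ι → ℝ}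
    {α : ℝ} (hα : 0 < α) (hw : ∀ j ∈ s, 0 ≤ w j) (hμ : ∀ j ∈ s, 0 < μ j)
    (hsum : ∑ j ∈ s, w j = α) :
    α⁻¹ * ∑ j ∈ s, w j * Real.log (μ j) ≤ Real.log ((∑ j ∈ s, w j * μ j) / α) := by
  have h := strictConcaveOn_log_Ioi.concaveOn.le_map_sum (t := s) (w := fun j => w j / α)
    (p := μ) (fun j hj => div_nonneg (hw j hj) hα.le)
    (by rw [← Finset.sum_div, hsum, div_self hα.ne']) hμ
  simp only [smul_eq_mul, div_mul_eq_mul_div, ← Finset.sum_div] at h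
  rwa [inv_mul_eq_div]

namespace Matrix

variable {n : Type*} [Fintype n]

theorem trace_vecMulVec_star_mul (x : n → ℂ) (X : Matrix n n ℂ) :
    (vecMulVec x (star x) * X).trace = star x ⬝ᵥ (X *ᵥ x) := by
  rw [vecMulVec_mul, trace_vecMulVec, dotProduct_comm, dotProduct_mulVec]

variable [DecidableEq n]

theorem star_dotProduct_conj_diagonal_mulVec (U : Matrix n n ℂ) (f : n → ℝ)
    (x : n → ℂ) :
    star x ⬝ᵥ ((U * diagonal (fun j => (f j : ℂ)) * Uᴴ) *ᵥ x)
      = ((∑ j, Complex.normSq ((Uᴴ *ᵥ x) j) * f j : ℝ) : ℂ) := by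
  have hstar : star x ᵥ* U = star (Uᴴ *ᵥ x) := by
    rw [star_mulVec, conjTranspose_conjTranspose]
  rw [← mulVec_mulVec, ← mulVec_mulVec, dotProduct_mulVec, hstar]
  push_cast
  refine Finset.sum_congr rfl fun j _ => ?_
  rw [mulVec_diagonal, Complex.normSq_eq_conj_mul_self, Pi.star_apply, Complex.star_def]
  ring

theorem sum_normSq_conjTranspose_mulVec {U : Matrix n n ℂ}
    (hU : U ∈ unitaryGroup n ℂ) (x : n → ℂ) :
    ((∑ j, Complex.normSq ((Uᴴ *ᵥ x) j) : ℝ) : ℂ) = star x ⬝ᵥ x := by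
  have h := star_dotProduct_conj_diagonal_mulVec U 1 x
  rw [Pi.one_def] at h
  simp only [Complex.ofReal_one, diagonal_one, mul_one] at h
  rw [← h, ← star_eq_conjTranspose, mem_unitaryGroup_iff.mp hU, one_mulVec]

theorem PosDef.pos_of_one_sub_smul_inv_mulVec_eq_smul {M : Matrix n n ℂ} {α μ : ℝ}
    (hM : M.PosDef) (hMα : (M - (α : ℂ) • 1).PosDef) {u : n → ℂ} (hu : u ≠ 0)
    (h : (1 - (α : ℂ) • M⁻¹) *ᵥ u = (μ : ℂ) • u) : 0 < μ := by
  set y := M⁻¹ *ᵥ u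
  have hMy : M *ᵥ y = u := by
    rw [mulVec_mulVec, mul_nonsing_inv _ ((isUnit_iff_isUnit_det M).mp hM.isUnit), one_mulVec]
  have hy : y ≠ 0 := by rintro hy; rw [hy, mulVec_zero] at hMy; exact hu hMy.symm
  -- pairing with `y` gives `y* (M - α) y = μ (y* M y)`, a positive multiple of `μ`
  have hlin : (M - (α : ℂ) • 1) *ᵥ y = (μ : ℂ) • M *ᵥ y := by
    rw [sub_mulVec, smul_mulVec, one_mulVec, hMy]
    rwa [sub_mulVec, one_mulVec, smul_mulVec] at h
  have hpos := hMα.dotProduct_mulVec_pos hy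
  rw [hlin, dotProduct_smul] at hpos
  have hp := Complex.pos_iff.mp (hM.dotProduct_mulVec_pos hy)
  have := (Complex.pos_iff.mp hpos).1
  simp only [smul_eq_mul, Complex.mul_re, Complex.ofReal_re, Complex.ofReal_im, zero_mul,
    sub_zero] at this
  exact pos_of_mul_pos_left this hp.1.le

theorem IsHermitian.star_dotProduct_mulVec_eq_sum {H : Matrix n n ℂ} (hH : H.IsHermitian)
    (x : n → ℂ) :
    star x ⬝ᵥ (H *ᵥ x) = ((∑ j, Complex.normSq
      (((hH.eigenvectorUnitary : Matrix n n ℂ)ᴴ *ᵥ x) j) * hH.eigenvalues j : ℝ) : ℂ) := by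
  conv_lhs => rw [hH.spectral_theorem]
  exact star_dotProduct_conj_diagonal_mulVec _ _ x

end Matrix

theorem star_dotProduct_matLog_mulVec {d : ℕ} {H : Matrix (Fin d) (Fin d) ℂ}
    (hH : H.IsHermitian) (x : Fin d → ℂ) :
    star x ⬝ᵥ (matLog H hH *ᵥ x) = ((∑ j, Complex.normSq
      (((hH.eigenvectorUnitary : Matrix (Fin d) (Fin d) ℂ)ᴴ *ᵥ x) j)
      * Real.log (hH.eigenvalues j) : ℝ) : ℂ) :=
  star_dotProduct_conj_diagonal_mulVec _ _ x

theorem stmt9_general {d k : ℕ} (A : Matrix (Fin d) (Fin d) ℂ) (uhat α : ℝ)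
    (huhat : ((uhat : ℂ) • (1 : Matrix (Fin d) (Fin d) ℂ) - A).PosDef)
    (hα : 0 < α)
    (hαlt : (((uhat - α : ℝ) : ℂ) • (1 : Matrix (Fin d) (Fin d) ℂ) - A).PosDef)
    (v : Fin k → (Fin d → ℂ))
    (hnorm : ∀ i, star (v i) ⬝ᵥ v i = (α : ℂ))
    (hsum : ∑ i, vecMulVec (v i) (star (v i)) = (1 : Matrix (Fin d) (Fin d) ℂ) - A)
    (hM : ((1 : Matrix (Fin d) (Fin d) ℂ) -
      (α : ℂ) • ((uhat : ℂ) • (1 : Matrix (Fin d) (Fin d) ℂ) - A)⁻¹).IsHermitian) :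
    ∑ i, Real.log (1 - (star (v i) ⬝ᵥ ((uhat : ℂ) • (1 : Matrix (Fin d) (Fin d) ℂ) - A)⁻¹ *ᵥ v i).re) ≥
      (1 / α) * (((1 : Matrix (Fin d) (Fin d) ℂ) - A) * matLog _ hM).trace.re := by
  set μ := hM.eigenvalues
  set w : Fin k → Fin d → ℝ := fun i j =>
    Complex.normSq (((hM.eigenvectorUnitary : Matrix (Fin d) (Fin d) ℂ)ᴴ *ᵥ v i) j)
  have hgap : ((uhat : ℂ) • 1 - A - (α : ℂ) • 1).PosDef := by
    convert hαlt using 1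
    rw [Complex.ofReal_sub, sub_smul]
    abel
  have hμ : ∀ j, 0 < μ j := fun j =>
    huhat.pos_of_one_sub_smul_inv_mulVec_eq_smul hgap
      ((WithLp.ofLp_eq_zero 2).ne.2 (hM.eigenvectorBasis.orthonormal.ne_zero j))
      (hM.mulVec_eigenvectorBasis j)
  have hw : ∀ i, ∑ j, w i j = α := fun i => by
    exact_mod_cast (sum_normSq_conjTranspose_mulVec hM.eigenvectorUnitary.2 (v i)).trans (hnorm i)
  have hquad : ∀ i, 1 - (star (v i) ⬝ᵥ ((uhat : ℂ) • 1 - A)⁻¹ *ᵥ v i).re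
      = (∑ j, w i j * μ j) / α := fun i => by
    have h := hM.star_dotProduct_mulVec_eq_sum (v i)
    rw [sub_mulVec, one_mulVec, smul_mulVec, dotProduct_sub, dotProduct_smul, hnorm i,
      smul_eq_mul] at h
    have hre := congrArg Complex.re h
    rw [Complex.sub_re, Complex.re_ofReal_mul, Complex.ofReal_re, Complex.ofReal_re] at hre
    rw [← hre]
    field_simp
  have htrace : ((1 - A) * matLog _ hM).trace.re = ∑ i, ∑ j, w i j * Real.log (μ j) := by
    rw [← hsum, Finset.sum_mul, trace_sum, Complex.re_sum]
    simp only [trace_vecMulVec_star_mul, star_dotProduct_matLog_mulVec, Complex.ofReal_re]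
    rfl
  rw [ge_iff_le, htrace, one_div, Finset.mul_sum]
  gcongr with i
  rw [hquad i]
  exact Real.inv_mul_sum_mul_log_le_log_sum_mul_div _ hα (fun j _ => Complex.normSq_nonneg _)
    (fun j _ => hμ j) (hw i)

/-- Let `A` be Hermitian PSD with `A ⪯ I` and `λ_max(A) < û`, and let
`v 1, …, v k` be vectors with `‖v i‖² = α` and `∑ i, v i (v i)ᴴ = I − A`.
If `α · λ_max((ûI−A)^{-1}) < 1` (i.e. `α < û − λ_max(A)`), then
`∑ i, log(1 − (v i)ᴴ(ûI−A)^{-1}(v i)) ≥ (1/α)·tr[(I−A)·log(I − α(ûI−A)^{-1})]`. -/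
theorem stmt9 {d k : ℕ} (A : Matrix (Fin d) (Fin d) ℂ) (uhat α : ℝ)
    (hA : A.PosSemidef)
    (hAle : ((1 : Matrix (Fin d) (Fin d) ℂ) - A).PosSemidef)
    (huhat : ((uhat : ℂ) • (1 : Matrix (Fin d) (Fin d) ℂ) - A).PosDef)
    (hα : 0 < α)
    (hαlt : (((uhat - α : ℝ) : ℂ) • (1 : Matrix (Fin d) (Fin d) ℂ) - A).PosDef)
    (v : Fin k → (Fin d → ℂ))
    (hnorm : ∀ i, star (v i) ⬝ᵥ v i = (α : ℂ))
    (hsum : ∑ i, vecMulVec (v i) (star (v i)) = (1 : Matrix (Fin d) (Fin d) ℂ) - A)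
    (hM : ((1 : Matrix (Fin d) (Fin d) ℂ) -
      (α : ℂ) • ((uhat : ℂ) • (1 : Matrix (Fin d) (Fin d) ℂ) - A)⁻¹).IsHermitian) :
    ∑ i, Real.log (1 - (star (v i) ⬝ᵥ ((uhat : ℂ) • (1 : Matrix (Fin d) (Fin d) ℂ) - A)⁻¹ *ᵥ v i).re) ≥
      (1 / α) * (((1 : Matrix (Fin d) (Fin d) ℂ) - A) * matLog _ hM).trace.re :=
  stmt9_general A uhat α huhat hα hαlt v hnorm hsum hM
end

section
/- Let d, m be positive integers with d < m/2. Then ∑_{i=0}^{m/2−1} log(1 − d/(m−i)) ≥ −d·log 2 − 2d²/m, where m is even. -/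
open Real intervalIntegral Set MeasureTheory

/-! With `m = 2n`, the summand `log (1 - d / (2n - x))` is antitone in `x`, so the sum dominates
`∫₀ⁿ log (1 - d / (2n - x)) dx = φ(2n) - φ(n)` where `φ c = (c - d) log (c - d) - c log c`.
Writing `φ c = -d log c + (c - d) log (1 - d / c)` and using `1 - 1/y ≤ log y ≤ y - 1` bounds
`(2n - d) log (1 - d / 2n)` below by `-d` and `(n - d) log (1 - d / n)` above by `-d + d² / n`,
leaving `-d log 2 - d² / n`. -/

lemma antitoneOn_log_one_sub_div_sub {c d : ℝ} (hd : 0 ≤ d) :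
    AntitoneOn (fun x => log (1 - d / (c - x))) (Iio (c - d)) := by
  intro x hx y hy hxy
  have hy' : d < c - y := by simp only [mem_Iio] at hy; linarith
  have hpos : 0 < 1 - d / (c - y) := by
    rw [sub_pos, div_lt_one (by linarith)]; exact hy'
  refine log_le_log hpos (sub_le_sub_left ?_ 1)
  exact div_le_div_of_nonneg_left hd (by linarith) (by linarith)

lemma integral_log_const_sub (c b : ℝ) :
    ∫ x in 0..b, log (c - x) = c * log c - (c - b) * log (c - b) - b := by
  rw [integral_comp_sub_left (fun x => log x), integral_log, sub_zero]
  ring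

lemma intervalIntegrable_log_const_sub (c a b : ℝ) :
    IntervalIntegrable (fun x => log (c - x)) volume a b := by
  simpa using (intervalIntegrable_log' (a := c - a) (b := c - b)).comp_sub_left c

lemma integral_log_one_sub_div_sub {c d b : ℝ} (hd : 0 ≤ d) (hb : 0 ≤ b) (hbd : b < c - d) :
    ∫ x in 0..b, log (1 - d / (c - x)) =
      (c - d) * log (c - d) - c * log c -
        ((c - d - b) * log (c - d - b) - (c - b) * log (c - b)) := by
  have hsplit : EqOn (fun x => log (1 - d / (c - x))) (fun x => log (c - d - x) - log (c - x))
      (uIcc 0 b) := by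
    intro x hx
    rw [uIcc_of_le hb] at hx
    have hcx : 0 < c - x := by linarith [hx.2]
    have hcdx : 0 < c - d - x := by linarith [hx.2]
    simp only
    rw [← log_div hcdx.ne' hcx.ne']
    congr 1
    field_simp
    ring
  rw [integral_congr hsplit, integral_sub (intervalIntegrable_log_const_sub _ _ _)
    (intervalIntegrable_log_const_sub _ _ _), integral_log_const_sub, integral_log_const_sub]
  ring

lemma neg_le_mul_log_sub_div {c d : ℝ} (hd : 0 ≤ d) (hdc : d < c) :
    -d ≤ (c - d) * log ((c - d) / c) := by
  have hc : 0 < c := by linarith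
  have hcd : 0 < c - d := by linarith
  have hlog := one_sub_inv_le_log_of_pos (div_pos hcd hc)
  calc -d = (c - d) * (1 - ((c - d) / c)⁻¹) := by field_simp; ring
    _ ≤ (c - d) * log ((c - d) / c) := mul_le_mul_of_nonneg_left hlog hcd.le

lemma mul_log_sub_div_le {c d : ℝ} (hd : 0 ≤ d) (hdc : d < c) :
    (c - d) * log ((c - d) / c) ≤ -d + d ^ 2 / c := by
  have hc : 0 < c := by linarith
  have hcd : 0 < c - d := by linarith
  have hlog := log_le_sub_one_of_pos (div_pos hcd hc)
  calc (c - d) * log ((c - d) / c) ≤ (c - d) * ((c - d) / c - 1) :=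
        mul_le_mul_of_nonneg_left hlog hcd.le
    _ = -d + d ^ 2 / c := by field_simp; ring

lemma le_integral_log_one_sub_div_two_mul_sub {n d : ℝ} (hd : 0 ≤ d) (hdn : d < n) :
    -d * log 2 - d ^ 2 / n ≤ ∫ x in 0..n, log (1 - d / (2 * n - x)) := by
  have hn : 0 < n := by linarith
  rw [integral_log_one_sub_div_sub hd hn.le (by linarith)]
  have hlog2n : log (2 * n) = log 2 + log n := log_mul two_ne_zero hn.ne'
  have hlog2nd : log (2 * n - d) = log ((2 * n - d) / (2 * n)) + log (2 * n) := by
    rw [log_div (by linarith) (by positivity), sub_add_cancel]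
  have hlognd : log (n - d) = log ((n - d) / n) + log n := by
    rw [log_div (by linarith) hn.ne', sub_add_cancel]
  have h2n := neg_le_mul_log_sub_div hd (by linarith : d < 2 * n)
  have hn' := mul_log_sub_div_le hd hdn
  rw [show 2 * n - d - n = n - d by ring, show 2 * n - n = n by ring, hlog2nd, hlognd, hlog2n]
  linarith

theorem stmt12_general (d m : ℕ) (hm : Even m) (hdm : 2 * d < m) :
    ∑ i ∈ Finset.range (m / 2), Real.log (1 - (d : ℝ) / ((m : ℝ) - (i : ℝ))) ≥
      -(d : ℝ) * Real.log 2 - 2 * (d : ℝ) ^ 2 / (m : ℝ) := by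
  obtain ⟨n, rfl⟩ := hm
  have hdn : (d : ℝ) < n := by exact_mod_cast (by omega : d < n)
  have hcast : ((n + n : ℕ) : ℝ) = 2 * n := by push_cast; ring
  rw [show (n + n) / 2 = n by omega, hcast,
    show 2 * (d : ℝ) ^ 2 / (2 * n) = (d : ℝ) ^ 2 / n by field_simp]
  have hanti : AntitoneOn (fun x => log (1 - d / (2 * n - x))) (Icc 0 (0 + n)) :=
    (antitoneOn_log_one_sub_div_sub d.cast_nonneg).mono fun x hx => by
      simp only [mem_Icc, mem_Iio] at hx ⊢; linarith
  calc -(d : ℝ) * log 2 - d ^ 2 / n ≤ ∫ x in 0..n, log (1 - d / (2 * n - x)) :=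
        le_integral_log_one_sub_div_two_mul_sub d.cast_nonneg hdn
    _ ≤ ∑ i ∈ Finset.range n, log (1 - d / (2 * n - i)) := by
        simpa using hanti.integral_le_sum

/-- For an even positive integer `m` and a positive integer `d` with `2d < m`,
`∑_{i=0}^{m/2−1} log(1 − d/(m−i)) ≥ −d·log 2 − 2d²/m`. -/
theorem stmt12 (d m : ℕ) (hd : 0 < d) (hm : Even m) (hdm : 2 * d < m) :
    ∑ i ∈ Finset.range (m / 2), Real.log (1 - (d : ℝ) / ((m : ℝ) - (i : ℝ))) ≥
      -(d : ℝ) * Real.log 2 - 2 * (d : ℝ) ^ 2 / (m : ℝ) :=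
  stmt12_general d m hm hdm
end

section
/- Let B ∈ C^{d×d} be Hermitian positive definite with tr(B) = d/2 and (d/tr(B))^d·det(B) ≥ 24/25. Then λ_max(B) ≤ 3/4 and λ_min(B) ≥ 1/3. -/
open Matrix Finset Real
open scoped ComplexOrder

/-
Put `xᵢ = 2 λᵢ(B)`, so that `∑ xᵢ = d` and `∏ xᵢ = 2^d det B ≥ 24/25`. Since `∑ (1 - xᵢ) = 0`,
`∏ xᵢ = ∏ xᵢ e^{1 - xᵢ}`, and every factor `x e^{1 - x}` lies in `[0, 1]`; hence each single
`xⱼ e^{1 - xⱼ}` is at least `24/25`, which forces `xⱼ ∈ [2/3, 3/2]` by comparing `e^{x - 1}` with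
its tangent lines at `2/3` and `3/2`.
-/

lemma mul_exp_one_sub_le_one (x : ℝ) : x * exp (1 - x) ≤ 1 := by
  have h := mul_le_mul_of_nonneg_right (add_one_le_exp (x - 1)) (exp_pos (1 - x)).le
  rwa [sub_add_cancel, ← exp_add, sub_add_sub_cancel', sub_self, exp_zero] at h

lemma Finset.prod_le_mul_exp_one_sub {ι : Type*} {s : Finset ι} {x : ι → ℝ}
    (hx : ∀ i ∈ s, 0 ≤ x i) (hsum : ∑ i ∈ s, x i = #s) {j : ι} (hj : j ∈ s) :
    ∏ i ∈ s, x i ≤ x j * exp (1 - x j) := by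
  classical
  have hexp : ∏ i ∈ s, exp (1 - x i) = 1 := by
    rw [← exp_sum, sum_sub_distrib, hsum, sum_const, nsmul_one, sub_self, exp_zero]
  calc ∏ i ∈ s, x i = ∏ i ∈ s, x i * exp (1 - x i) := by rw [prod_mul_distrib, hexp, mul_one]
    _ = x j * exp (1 - x j) * ∏ i ∈ s.erase j, x i * exp (1 - x i) :=
      (mul_prod_erase s _ hj).symm
    _ ≤ x j * exp (1 - x j) * 1 := by
      gcongr
      · exact mul_nonneg (hx j hj) (exp_pos _).le
      · exact prod_le_one (fun i hi => mul_nonneg (hx i (mem_of_mem_erase hi)) (exp_pos _).le)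
          (fun i _ => mul_exp_one_sub_le_one (x i))
    _ = x j * exp (1 - x j) := mul_one _

lemma mem_Icc_of_le_mul_exp_one_sub {x : ℝ} (h : 24 / 25 ≤ x * exp (1 - x)) :
    x ∈ Set.Icc (2 / 3) (3 / 2) := by
  have hkey : 24 / 25 * exp (x - 1) ≤ x := by
    have h' := mul_le_mul_of_nonneg_right h (exp_pos (x - 1)).le
    rwa [mul_assoc, ← exp_add, sub_add_sub_cancel', sub_self, exp_zero, mul_one] at h'
  have tangent (a : ℝ) : exp (a - 1) * (x - a + 1) ≤ exp (x - 1) := by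
    have := mul_le_mul_of_nonneg_left (add_one_le_exp (x - a)) (exp_pos (a - 1)).le
    rwa [← exp_add, sub_add_sub_cancel'] at this
  have exp_neg_third : 25 / 36 < exp (2 / 3 - 1) := by
    have h3 : exp (1 / 3) < 36 / 25 := by
      refine lt_of_pow_lt_pow_left₀ 3 (by norm_num) ?_
      rw [← exp_nat_mul]
      norm_num
      linarith [exp_one_lt_d9]
    rw [show (2 / 3 - 1 : ℝ) = -(1 / 3) by norm_num, exp_neg,
      lt_inv_comm₀ (by norm_num) (exp_pos _)]
    linarith
  have exp_half : 25 / 16 < exp (3 / 2 - 1) := by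
    refine lt_of_pow_lt_pow_left₀ 2 (exp_pos _).le ?_
    rw [← exp_nat_mul]
    norm_num
    linarith [exp_one_gt_d9]
  have hx : 0 < x := lt_of_lt_of_le (by positivity) hkey
  constructor
  · by_contra! hx'
    nlinarith [tangent (2 / 3),
      mul_le_mul_of_nonneg_right exp_neg_third.le (by linarith : 0 ≤ x + 1 / 3)]
  · by_contra! hx'
    nlinarith [tangent (3 / 2),
      mul_le_mul_of_nonneg_right exp_half.le (by linarith : 0 ≤ x - 1 / 2)]

lemma Matrix.PosDef.eigenvalues_mem_Icc {n : Type*} [Fintype n] [DecidableEq n]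
    {B : Matrix n n ℂ} (hB : B.PosDef) (htr : B.trace.re = Fintype.card n / 2)
    (hdet : 24 / 25 ≤ 2 ^ Fintype.card n * B.det.re) (i : n) :
    hB.1.eigenvalues i ∈ Set.Icc (1 / 3) (3 / 4) := by
  set x : n → ℝ := fun i => 2 * hB.1.eigenvalues i
  have hsum : ∑ i, x i = #(univ : Finset n) := by
    have h : ∑ i, hB.1.eigenvalues i = Fintype.card n / 2 := by
      rw [← htr, hB.1.trace_eq_sum_eigenvalues, ← RCLike.ofReal_sum]
      rfl
    rw [← mul_sum, h, card_univ]
    ring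
  have hprod : ∏ i, x i = 2 ^ Fintype.card n * B.det.re := by
    rw [prod_mul_distrib, prod_const, card_univ, hB.1.det_eq_prod_eigenvalues,
      ← RCLike.ofReal_prod]
    rfl
  have hx : x i ∈ Set.Icc (2 / 3) (3 / 2) := mem_Icc_of_le_mul_exp_one_sub <| calc
    24 / 25 ≤ 2 ^ Fintype.card n * B.det.re := hdet
    _ = ∏ i, x i := hprod.symm
    _ ≤ x i * exp (1 - x i) := prod_le_mul_exp_one_sub
      (fun i _ => mul_nonneg two_pos.le (hB.eigenvalues_pos i).le) hsum (mem_univ i)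
  exact ⟨by linarith [hx.1], by linarith [hx.2]⟩

/-- Let `B ∈ ℂ^{d×d}` be Hermitian positive definite with `tr(B) = d/2` and
`(d/tr B)^d · det B ≥ 24/25`.  Then `λ_max(B) ≤ 3/4` and `λ_min(B) ≥ 1/3`. -/
theorem stmt15 {d : ℕ} (hd : 0 < d) (B : Matrix (Fin d) (Fin d) ℂ)
    (hB : B.PosDef)
    (htr : B.trace = (((d : ℝ) / 2 : ℝ) : ℂ))
    (hdet : ((d : ℝ) / B.trace.re) ^ d * B.det.re ≥ 24 / 25) :
    (⨆ i, hB.1.eigenvalues i) ≤ 3 / 4 ∧ (⨅ i, hB.1.eigenvalues i) ≥ 1 / 3 := by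
  have : Nonempty (Fin d) := ⟨⟨0, hd⟩⟩
  have htr_re : B.trace.re = Fintype.card (Fin d) / 2 := by
    rw [htr, Fintype.card_fin, Complex.ofReal_re]
  have hratio : (d : ℝ) / B.trace.re = 2 := by
    rw [htr_re, Fintype.card_fin]
    field_simp [(Nat.cast_pos.2 hd).ne']
  have hbounds := hB.eigenvalues_mem_Icc htr_re (by rw [Fintype.card_fin, ← hratio]; exact hdet)
  exact ⟨ciSup_le fun i => (hbounds i).2, le_ciInf fun i => (hbounds i).1⟩
end

section
/- Let v_1,...,v_m ∈ C^d with m even, ∑ v_i v_i* = I, and ‖v_i‖² = α = d/m for all i, where m ≥ 49d². Then there exists a partition S_1, S_2 of [m] with |S_1| = |S_2| = m/2 such that for every unit vector u ∈ C^d and j ∈ {1,2}, ∑_{i∈S_j} |⟨u, v_i⟩|² ≤ 3/4. -/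
/-!
Pair up the indices and put one index of each pair into `S`. Orienting the pairs greedily, so
that each new difference `X a - X b` makes a non-acute angle with the running sum, gives
`‖∑ i ∈ S, X i - ∑ i ∈ Sᶜ, X i‖² ≤ ∑ ‖X a - X b‖²` for vectors in any inner product space.
Apply this to the flattened rank-one matrices `X i = v i (v i)ᴴ`: the quadratic form
`|⟨u, v i⟩|² = ⟪u uᴴ, v i (v i)ᴴ⟫` is linear in `X i`, `‖X i‖ = α` and `‖u uᴴ‖ = 1`.
So the two halves differ by at most `√(2 m α²) = √(2 d² / m) ≤ √(2 / 49) < 1 / 2`, while by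
isotropy they add up to `1`; hence each is at most `3 / 4`.
-/

open Matrix Finset RCLike

open scoped InnerProductSpace ComplexConjugate

section Balancing

variable {E : Type*} [NormedAddCommGroup E]

theorem exists_norm_sum_sub_sq_le (𝕜 : Type*) [RCLike 𝕜] [InnerProductSpace 𝕜 E]
    {κ : Type*} [Fintype κ] (f : κ → Bool → E) :
    ∃ σ : κ → Bool, ‖∑ k, (f k (σ k) - f k (!σ k))‖ ^ 2 ≤ ∑ k, ‖f k true - f k false‖ ^ 2 := by
  classical
  suffices ∀ s : Finset κ, ∃ σ : κ → Bool,
      ‖∑ k ∈ s, (f k (σ k) - f k (!σ k))‖ ^ 2 ≤ ∑ k ∈ s, ‖f k true - f k false‖ ^ 2 from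
    this univ
  intro s
  induction s using Finset.induction_on with
  | empty => exact ⟨fun _ => true, by simp⟩
  | insert a s ha ih =>
    obtain ⟨σ, hσ⟩ := ih
    set P := ∑ k ∈ s, (f k (σ k) - f k (!σ k))
    obtain ⟨b, hb⟩ : ∃ b, re ⟪P, f a b - f a (!b)⟫_𝕜 ≤ 0 := by
      by_cases h : re ⟪P, f a true - f a false⟫_𝕜 ≤ 0
      · exact ⟨true, h⟩
      · refine ⟨false, ?_⟩
        rw [Bool.not_false, ← neg_sub, inner_neg_right, map_neg]
        linarith
    have hnorm : ‖f a b - f a (!b)‖ = ‖f a true - f a false‖ := by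
      cases b
      · exact norm_sub_rev _ _
      · rfl
    refine ⟨Function.update σ a b, ?_⟩
    have hs : ∑ k ∈ s, (f k (Function.update σ a b k) - f k (!Function.update σ a b k)) = P :=
      sum_congr rfl fun k hk => by rw [Function.update_of_ne (ne_of_mem_of_not_mem hk ha)]
    rw [sum_insert ha, sum_insert ha, Function.update_self, hs, add_comm, @norm_add_sq 𝕜, hnorm]
    linarith

theorem Equiv.sum_filter_snd_eq {ι κ M : Type*} [Fintype ι] [Fintype κ] [AddCommMonoid M]
    (e : ι ≃ κ × Bool) (c : κ → Bool) (g : ι → M) :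
    ∑ i ∈ univ.filter (fun i => (e i).2 = c (e i).1), g i = ∑ k, g (e.symm (k, c k)) := by
  rw [sum_filter, ← e.symm.sum_comp, Fintype.sum_prod_type]
  simp

theorem exists_card_eq_half_norm_sum_sub_sum_compl_sq_le
    (𝕜 : Type*) [RCLike 𝕜] [InnerProductSpace 𝕜 E] {ι : Type*} [Fintype ι] [DecidableEq ι]
    (heven : Even (Fintype.card ι)) (X : ι → E) {r : ℝ} (hX : ∀ i, ‖X i‖ ≤ r) :
    ∃ S : Finset ι, #S = Fintype.card ι / 2 ∧
      ‖∑ i ∈ S, X i - ∑ i ∈ Sᶜ, X i‖ ^ 2 ≤ 2 * Fintype.card ι * r ^ 2 := by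
  set n := Fintype.card ι / 2
  have hcard : Fintype.card ι = 2 * n := by obtain ⟨k, hk⟩ := heven; omega
  let e : ι ≃ Fin n × Bool := Fintype.equivOfCardEq (by simp [hcard, mul_comm])
  obtain ⟨σ, hσ⟩ := exists_norm_sum_sub_sq_le 𝕜 fun k b => X (e.symm (k, b))
  set S := univ.filter fun i => (e i).2 = σ (e i).1
  have hcompl : Sᶜ = univ.filter fun i => (e i).2 = !σ (e i).1 := by
    ext i; simp [S, Bool.eq_not]
  refine ⟨S, ?_, ?_⟩
  · rw [card_eq_sum_ones, e.sum_filter_snd_eq]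
    simp
  · rw [hcompl, e.sum_filter_snd_eq, e.sum_filter_snd_eq (fun k => !σ k), ← sum_sub_distrib]
    refine hσ.trans ?_
    calc ∑ k, ‖X (e.symm (k, true)) - X (e.symm (k, false))‖ ^ 2
        ≤ ∑ _k : Fin n, (2 * r) ^ 2 := by
          gcongr with k
          exact (norm_sub_le _ _).trans
            (by linarith [hX (e.symm (k, true)), hX (e.symm (k, false))])
      _ = 2 * Fintype.card ι * r ^ 2 := by
          rw [sum_const, card_univ, Fintype.card_fin, hcard]; push_cast; ring

end Balancing

section FlatOuter

variable {𝕜 n : Type*} [RCLike 𝕜] [Fintype n]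

noncomputable def flatOuter (x : n → 𝕜) : EuclideanSpace 𝕜 (n × n) :=
  WithLp.toLp 2 fun pq => x pq.1 * conj (x pq.2)

theorem inner_flatOuter (u x : n → 𝕜) :
    ⟪flatOuter u, flatOuter x⟫_𝕜 = ((‖star u ⬝ᵥ x‖ ^ 2 : ℝ) : 𝕜) := by
  rw [ofReal_pow, ← mul_conj, EuclideanSpace.inner_eq_star_dotProduct]
  simp only [flatOuter, dotProduct, Pi.star_apply, star_def, map_sum, map_mul, conj_conj,
    sum_mul_sum, Fintype.sum_prod_type]
  exact sum_congr rfl fun p _ => sum_congr rfl fun q _ => by ring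

theorem norm_flatOuter (x : n → 𝕜) : ‖flatOuter x‖ = ‖star x ⬝ᵥ x‖ := by
  have h := @norm_sq_eq_re_inner 𝕜 _ _ _ _ (flatOuter x)
  rw [inner_flatOuter, ofReal_re] at h
  exact (pow_left_inj₀ (norm_nonneg _) (norm_nonneg _) two_ne_zero).mp h

theorem star_dotProduct_self_eq (u : n → 𝕜) : star u ⬝ᵥ u = ((∑ j, ‖u j‖ ^ 2 : ℝ) : 𝕜) := by
  simp [dotProduct, RCLike.conj_mul]

theorem sum_norm_star_dotProduct_sq {ι : Type*} [Fintype ι] {v : ι → n → 𝕜} [DecidableEq n]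
    (hv : ∑ i, vecMulVec (v i) (star (v i)) = 1) (u : n → 𝕜) :
    ∑ i, ‖star u ⬝ᵥ v i‖ ^ 2 = ∑ j, ‖u j‖ ^ 2 := by
  apply ofReal_injective (K := 𝕜)
  calc ((∑ i, ‖star u ⬝ᵥ v i‖ ^ 2 : ℝ) : 𝕜)
      = ∑ i, (star u ⬝ᵥ v i) * (star (v i) ⬝ᵥ u) := by
        push_cast
        exact sum_congr rfl fun i _ => by rw [← mul_conj, ← star_def, ← star_dotProduct]
    _ = star u ⬝ᵥ ((∑ i, vecMulVec (v i) (star (v i))) *ᵥ u) := by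
        simp [sum_mulVec, dotProduct_sum, vecMulVec_mulVec, dotProduct_smul, mul_comm]
    _ = _ := by rw [hv, one_mulVec, star_dotProduct_self_eq]

theorem abs_sum_sub_sum_norm_star_dotProduct_sq_le {ι : Type*} (v : ι → n → 𝕜) {u : n → 𝕜}
    (hu : ∑ j, ‖u j‖ ^ 2 = 1) (S T : Finset ι) :
    |∑ i ∈ S, ‖star u ⬝ᵥ v i‖ ^ 2 - ∑ i ∈ T, ‖star u ⬝ᵥ v i‖ ^ 2| ≤
      ‖∑ i ∈ S, flatOuter (v i) - ∑ i ∈ T, flatOuter (v i)‖ := by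
  have hu' : ‖flatOuter u‖ = 1 := by simp [norm_flatOuter, star_dotProduct_self_eq, hu]
  have hdiff : ∑ i ∈ S, ‖star u ⬝ᵥ v i‖ ^ 2 - ∑ i ∈ T, ‖star u ⬝ᵥ v i‖ ^ 2 =
      re ⟪flatOuter u, ∑ i ∈ S, flatOuter (v i) - ∑ i ∈ T, flatOuter (v i)⟫_𝕜 := by
    simp [inner_sub_right, inner_sum, inner_flatOuter]
  rw [hdiff]
  calc _ ≤ _ := abs_re_le_norm _
    _ ≤ _ := norm_inner_le_norm _ _
    _ = _ := by rw [hu', one_mul]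

end FlatOuter

theorem stmt16_general {m d : ℕ} (hm : Even m) (hm49 : m ≥ 49 * d ^ 2)
    (α : ℝ) (hα : α = (d : ℝ) / m)
    (v : Fin m → (Fin d → ℂ))
    (hnorm : ∀ i, star (v i) ⬝ᵥ v i = (α : ℂ))
    (hiso : ∑ i, vecMulVec (v i) (star (v i)) = (1 : Matrix (Fin d) (Fin d) ℂ)) :
    ∃ S : Finset (Fin m), S.card = m / 2 ∧
      ∀ u : Fin d → ℂ, ∑ j, ‖u j‖ ^ 2 = 1 →
        (∑ i ∈ S, ‖star u ⬝ᵥ v i‖ ^ 2 ≤ 3 / 4 ∧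
          ∑ i ∈ Sᶜ, ‖star u ⬝ᵥ v i‖ ^ 2 ≤ 3 / 4) := by
  obtain ⟨S, hcard, hS⟩ := exists_card_eq_half_norm_sum_sub_sum_compl_sq_le ℂ
    (by simpa using hm) (fun i => flatOuter (v i)) (r := |α|) fun i => by
      rw [norm_flatOuter, hnorm, Complex.norm_real, Real.norm_eq_abs]
  have hsmall : 2 * (m : ℝ) * |α| ^ 2 ≤ 2 / 49 := by
    rcases Nat.eq_zero_or_pos m with rfl | hm0
    · norm_num
    have h49 : (49 : ℝ) * d ^ 2 ≤ m := by exact_mod_cast hm49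
    have hm0' : (0 : ℝ) < m := by exact_mod_cast hm0
    rw [sq_abs, hα, div_pow, show 2 * (m : ℝ) * (d ^ 2 / m ^ 2) = 2 * d ^ 2 / m by field_simp,
      div_le_div_iff₀ hm0' (by norm_num)]
    linarith
  refine ⟨S, by simpa using hcard, fun u hu => ?_⟩
  have htotal := (sum_add_sum_compl S _).trans (sum_norm_star_dotProduct_sq hiso u)
  have hgap := abs_sum_sub_sum_norm_star_dotProduct_sq_le v hu S Sᶜ
  have hhalf : ‖∑ i ∈ S, flatOuter (v i) - ∑ i ∈ Sᶜ, flatOuter (v i)‖ ≤ 1 / 2 := by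
    simp only [Fintype.card_fin] at hS
    nlinarith [norm_nonneg (∑ i ∈ S, flatOuter (v i) - ∑ i ∈ Sᶜ, flatOuter (v i))]
  rw [hu] at htotal
  constructor <;> linarith [abs_le.mp (hgap.trans hhalf)]

/-- Weaver's `KS₂` discrepancy problem in the regime `m ≥ 49d²`: given
`v 1, …, v m ∈ ℂ^d` with `m` even, `∑ i, v i (v i)ᴴ = I` and `‖v i‖² = α = d/m`,
there is a partition `S, Sᶜ` of `[m]` with `|S| = |Sᶜ| = m/2` such that for
every unit vector `u ∈ ℂ^d` both parts satisfy `∑_{i∈part} |⟨u, v i⟩|² ≤ 3/4`. -/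
theorem stmt16 {m d : ℕ} (hm : Even m) (hm49 : m ≥ 49 * d ^ 2) (hm0 : 0 < m)
    (α : ℝ) (hα : α = (d : ℝ) / m)
    (v : Fin m → (Fin d → ℂ))
    (hnorm : ∀ i, star (v i) ⬝ᵥ v i = (α : ℂ))
    (hiso : ∑ i, vecMulVec (v i) (star (v i)) = (1 : Matrix (Fin d) (Fin d) ℂ)) :
    ∃ S : Finset (Fin m), S.card = m / 2 ∧
      ∀ u : Fin d → ℂ, ∑ j, ‖u j‖ ^ 2 = 1 →
        (∑ i ∈ S, ‖star u ⬝ᵥ v i‖ ^ 2 ≤ 3 / 4 ∧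
          ∑ i ∈ Sᶜ, ‖star u ⬝ᵥ v i‖ ^ 2 ≤ 3 / 4) :=
  stmt16_general hm hm49 α hα v hnorm hiso
end

section
/- Let A ∈ C^{d×d} be Hermitian with eigenvalues λ_1,...,λ_d, and suppose u − λ_i ≥ c > α > 0 for all i and δ = α/d. Then (1/d)·[tr log(I + δ(uI−A)^{-1})·d + tr log(I − α((u+δ)I−A)^{-1})] ≥ log(1 − α²/c²). -/
open Matrix
open scoped ComplexOrder

section Resolvent

variable {𝕜 n : Type*} [RCLike 𝕜] [Fintype n] [DecidableEq n] {A : Matrix n n 𝕜}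

lemma Matrix.IsHermitian.det_smul_one_sub (hA : A.IsHermitian) (w : 𝕜) :
    (w • (1 : Matrix n n 𝕜) - A).det = ∏ i, (w - hA.eigenvalues i) := by
  rw [show w • (1 : Matrix n n 𝕜) = scalar n w by simp [smul_one_eq_diagonal], ← eval_charpoly,
    hA.charpoly_eq, Polynomial.eval_prod]
  simp

lemma Matrix.IsHermitian.det_one_add_smul_inv (hA : A.IsHermitian) (z w : ℝ)
    (hw : ∀ i, w - hA.eigenvalues i ≠ 0) :
    (1 + (z : 𝕜) • ((w : 𝕜) • (1 : Matrix n n 𝕜) - A)⁻¹).det =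
      ((∏ i, (1 + z / (w - hA.eigenvalues i)) : ℝ) : 𝕜) := by
  set M := (w : 𝕜) • (1 : Matrix n n 𝕜) - A
  have hdetM : M.det = ((∏ i, (w - hA.eigenvalues i) : ℝ) : 𝕜) := by
    rw [hA.det_smul_one_sub]
    push_cast
    rfl
  have hM : IsUnit M.det := by
    rw [hdetM, isUnit_iff_ne_zero, RCLike.ofReal_ne_zero]
    exact Finset.prod_ne_zero_iff.mpr fun i _ => hw i
  have hfactor : 1 + (z : 𝕜) • M⁻¹ = (((w + z : ℝ) : 𝕜) • 1 - A) * M⁻¹ := by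
    rw [show ((w + z : ℝ) : 𝕜) • (1 : Matrix n n 𝕜) - A = M + (z : 𝕜) • 1 by
      simp only [M, RCLike.ofReal_add, add_smul]; abel]
    rw [add_mul, mul_nonsing_inv M hM, smul_mul, one_mul]
  have hterm : ∀ i, (w + z - hA.eigenvalues i) / (w - hA.eigenvalues i) =
      1 + z / (w - hA.eigenvalues i) := fun i => by
    field_simp [hw i]
    ring
  rw [hfactor, det_mul, det_nonsing_inv, Ring.inverse_eq_inv', hdetM, hA.det_smul_one_sub]
  simp_rw [← RCLike.ofReal_sub, ← RCLike.ofReal_prod, ← RCLike.ofReal_inv, ← RCLike.ofReal_mul,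
    ← div_eq_mul_inv, ← Finset.prod_div_distrib, hterm]

lemma Matrix.IsHermitian.det_one_sub_smul_inv (hA : A.IsHermitian) (z w : ℝ)
    (hw : ∀ i, w - hA.eigenvalues i ≠ 0) :
    (1 - (z : 𝕜) • ((w : 𝕜) • (1 : Matrix n n 𝕜) - A)⁻¹).det =
      ((∏ i, (1 - z / (w - hA.eigenvalues i)) : ℝ) : 𝕜) := by
  simpa only [RCLike.ofReal_neg, neg_smul, neg_div, ← sub_eq_add_neg] using
    hA.det_one_add_smul_inv (-z) w hw

end Resolvent

lemma re_trace_matLog_eq_log_det {d : ℕ} (B : Matrix (Fin d) (Fin d) ℂ) (hB : B.IsHermitian)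
    (hdet : B.det ≠ 0) : (matLog B hB).trace.re = Real.log B.det.re := by
  have heig : ∀ i ∈ Finset.univ, hB.eigenvalues i ≠ 0 := by
    rw [hB.det_eq_prod_eigenvalues, RCLike.ofReal_eq_complex_ofReal,
      ← Complex.ofReal_prod] at hdet
    exact Finset.prod_ne_zero_iff.mp (Complex.ofReal_ne_zero.mp hdet)
  rw [matLog, trace_mul_cycle, hB.eigenvectorUnitary.prop.1, one_mul, trace_diagonal,
    hB.det_eq_prod_eigenvalues, RCLike.ofReal_eq_complex_ofReal, ← Complex.ofReal_prod,
    ← Complex.ofReal_sum, Complex.ofReal_re, Complex.ofReal_re, Real.log_prod heig]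

lemma re_trace_matLog_of_det_eq_prod {d : ℕ} (B : Matrix (Fin d) (Fin d) ℂ) (hB : B.IsHermitian)
    {g : Fin d → ℝ} (hg : ∀ i, g i ≠ 0) (hdet : B.det = ((∏ i, g i : ℝ) : ℂ)) :
    (matLog B hB).trace.re = ∑ i, Real.log (g i) := by
  have hprod : ∏ i, g i ≠ 0 := Finset.prod_ne_zero_iff.mpr fun i _ => hg i
  rw [re_trace_matLog_eq_log_det B hB (hdet ▸ Complex.ofReal_ne_zero.mpr hprod), hdet,
    Complex.ofReal_re, Real.log_prod fun i _ => hg i]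

namespace Real

lemma log_one_add_le_mul_log_one_add_div {x : ℝ} (hx : 0 ≤ x) {n : ℕ} (hn : 0 < n) :
    log (1 + x) ≤ n * log (1 + x / n) := by
  have hxn : (-2 : ℝ) ≤ x / n := by linarith [div_nonneg hx n.cast_nonneg]
  rw [← log_pow]
  refine log_le_log (by positivity) ?_
  simpa [mul_div_cancel₀ x (by positivity : (n : ℝ) ≠ 0)] using one_add_mul_le_pow hxn n

lemma log_one_sub_sq_div_sq_le {α c t : ℝ} (hα : 0 < α) (hcα : α < c) (hct : c ≤ t) {n : ℕ}
    (hn : 0 < n) :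
    log (1 - α ^ 2 / c ^ 2) ≤ n * log (1 + α / n / t) + log (1 - α / (t + α / n)) := by
  have hc : 0 < c := by linarith
  have ht : 0 < t := by linarith
  have hαt : α / t < 1 := (div_lt_one ht).mpr (by linarith)
  have hαn : 0 ≤ α / n := by positivity
  calc log (1 - α ^ 2 / c ^ 2)
      ≤ log (1 - α ^ 2 / t ^ 2) := by
        have : α ^ 2 / c ^ 2 < 1 := (div_lt_one (by positivity)).mpr (by nlinarith)
        gcongr
    _ = log (1 + α / t) + log (1 - α / t) := by
        rw [← log_mul (by positivity) (by linarith)]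
        congr 1
        field_simp
        ring
    _ ≤ n * log (1 + α / n / t) + log (1 - α / (t + α / n)) := by
        rw [div_right_comm]
        gcongr
        · exact log_one_add_le_mul_log_one_add_div (by positivity) hn
        · linarith

end Real

/-- Let `A ∈ ℂ^{d×d}` be Hermitian with eigenvalues `λ_i` satisfying
`u − λ_i ≥ c > α > 0` for all `i`, and let `δ = α/d`.  Then
`(1/d)·[d·tr log(I + δ(uI−A)^{-1}) + tr log(I − α((u+δ)I−A)^{-1})]
  ≥ log(1 − α²/c²)`. -/
theorem stmt18 {d : ℕ} (hd : 0 < d) (A : Matrix (Fin d) (Fin d) ℂ)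
    (hA : A.IsHermitian) (u c α δ : ℝ)
    (hgap : ∀ i, u - hA.eigenvalues i ≥ c)
    (hcα : c > α) (hα : 0 < α) (hδ : δ = α / d)
    (h1 : ((1 : Matrix (Fin d) (Fin d) ℂ) +
      (δ : ℂ) • ((u : ℂ) • (1 : Matrix (Fin d) (Fin d) ℂ) - A)⁻¹).IsHermitian)
    (h2 : ((1 : Matrix (Fin d) (Fin d) ℂ) -
      (α : ℂ) • (((u + δ : ℝ) : ℂ) • (1 : Matrix (Fin d) (Fin d) ℂ) - A)⁻¹).IsHermitian) :
    (1 / (d : ℝ)) * ((d : ℝ) * (matLog _ h1).trace.re + (matLog _ h2).trace.re) ≥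
      Real.log (1 - α ^ 2 / c ^ 2) := by
  have hd' : (0 : ℝ) < d := by exact_mod_cast hd
  have hpos : ∀ i, 0 < u - hA.eigenvalues i := fun i => (hα.trans hcα).trans_le (hgap i)
  have hδpos : 0 < δ := hδ ▸ by positivity
  have hpos' : ∀ i, 0 < u + δ - hA.eigenvalues i := fun i => by linarith [hpos i]
  have htr1 : (matLog _ h1).trace.re = ∑ i, Real.log (1 + δ / (u - hA.eigenvalues i)) :=
    re_trace_matLog_of_det_eq_prod _ h1 (fun i => by have := hpos i; positivity)
      (hA.det_one_add_smul_inv δ u fun i => (hpos i).ne')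
  have htr2 : (matLog _ h2).trace.re = ∑ i, Real.log (1 - α / (u + δ - hA.eigenvalues i)) := by
    refine re_trace_matLog_of_det_eq_prod _ h2 (fun i => ?_)
      (hA.det_one_sub_smul_inv α (u + δ) fun i => (hpos' i).ne')
    have : α / (u + δ - hA.eigenvalues i) < 1 :=
      (div_lt_one (hpos' i)).mpr (by linarith [hgap i])
    linarith
  have hpoint : ∀ i, Real.log (1 - α ^ 2 / c ^ 2) ≤
      d * Real.log (1 + δ / (u - hA.eigenvalues i)) + Real.log (1 - α / (u + δ - hA.eigenvalues i)) := fun i => by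
    rw [add_sub_right_comm, hδ]
    exact Real.log_one_sub_sq_div_sq_le hα hcα (hgap i) hd
  have hsum : d * Real.log (1 - α ^ 2 / c ^ 2) ≤
      d * ∑ i, Real.log (1 + δ / (u - hA.eigenvalues i)) + ∑ i, Real.log (1 - α / (u + δ - hA.eigenvalues i)) := by
    rw [Finset.mul_sum, ← Finset.sum_add_distrib]
    simpa using Finset.card_nsmul_le_sum Finset.univ _ _ fun i _ => hpoint i
  rw [htr1, htr2, ge_iff_le, one_div, inv_mul_eq_div, le_div_iff₀ hd']
  linarith
end
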